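/- arXiv:1908.11558 — 2 statements merged into one kernel-verified Lean document; each statement's English description precedes it below -/
import Mathlib

section
/- Let A ⊂ B_{r₀}(x*) ⊂ ℝ² be measurable with |A| = κ and let ζ ∈ H¹(B_{r₀}(x*)) with ζ ≤ 0 exactly on A (i.e. A = {ζ ≤ 0} ∩ B_{r₀}(x*)) and ‖∇ζ‖_{L^∞} ≤ M. Then ∫_A ζ dx ≥ −C κ^{3/2}, where C depends only on r₀ and M, provided κ is sufficiently small. In particular |∫_A ζ dx| = O(κ^{3/2}) as κ → 0. -/
open MeasureTheory Metric Set Filter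

noncomputable section

abbrev E2 : Type := EuclideanSpace ℝ (Fin 2)

def lap (u : E2 → ℝ) (x : E2) : ℝ :=
  ∑ i : Fin 2, fderiv ℝ (fun y => fderiv ℝ u y (EuclideanSpace.single i 1)) x
    (EuclideanSpace.single i 1)

def perp (v : E2) : E2 := (WithLp.equiv 2 (Fin 2 → ℝ)).symm ![v 1, -v 0]

/-- Inside a ball of radius `r₀`, around any point one can find a ball of radius `s/2`
contained in `ball z s ∩ ball x₀ r₀`, provided `0 < s ≤ r₀`. -/
lemma aux_inner_ball (x₀ z : E2) (r₀ s : ℝ) (hz : z ∈ ball x₀ r₀) (hs : 0 < s)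
    (hsr : s ≤ r₀) : ∃ y : E2, ball y (s/2) ⊆ ball z s ∩ ball x₀ r₀ := by
  have hr₀ : 0 < r₀ := lt_of_lt_of_le hs hsr
  rcases le_or_gt (dist z x₀) (s/2) with h | h
  · refine ⟨x₀, fun w hw => ⟨?_, ?_⟩⟩
    · have hw' : dist w x₀ < s/2 := mem_ball.mp hw
      rw [mem_ball]
      calc dist w z ≤ dist w x₀ + dist x₀ z := dist_triangle _ _ _
        _ < s/2 + s/2 := by rw [dist_comm x₀ z]; linarith
        _ = s := by ring
    · have hw' : dist w x₀ < s/2 := mem_ball.mp hw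
      rw [mem_ball]; linarith
  · set d := dist z x₀ with hd
    have hd0 : 0 < d := lt_trans (by linarith) h
    set t : ℝ := s / (2 * d) with ht
    have ht0 : 0 < t := div_pos hs (by linarith)
    have ht1 : t < 1 := by
      rw [ht, div_lt_one (by linarith)]; linarith
    refine ⟨z + t • (x₀ - z), fun w hw => ?_⟩
    have hxz : ‖x₀ - z‖ = d := by rw [← dist_eq_norm, dist_comm]
    have hdyz : dist (z + t • (x₀ - z)) z = s/2 := by
      rw [dist_eq_norm, add_sub_cancel_left, norm_smul, Real.norm_eq_abs,
        abs_of_pos ht0, hxz, ht]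
      field_simp
    have hdyx : dist (z + t • (x₀ - z)) x₀ = d - s/2 := by
      have heq : z + t • (x₀ - z) - x₀ = (1 - t) • (z - x₀) := by
        simp [smul_sub, sub_smul, one_smul]; abel
      rw [dist_eq_norm, heq, norm_smul, Real.norm_eq_abs, abs_of_pos (by linarith),
        show ‖z - x₀‖ = d from (dist_eq_norm z x₀).symm, ht]
      field_simp
    have hw' : dist w (z + t • (x₀ - z)) < s/2 := mem_ball.mp hw
    constructor
    · rw [mem_ball]
      calc dist w z ≤ dist w (z + t • (x₀ - z)) + dist (z + t • (x₀ - z)) z :=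
            dist_triangle _ _ _
        _ < s/2 + s/2 := by rw [hdyz]; linarith
        _ = s := by ring
    · rw [mem_ball]
      have hdlt : d < r₀ := mem_ball.mp hz
      calc dist w x₀ ≤ dist w (z + t • (x₀ - z)) + dist (z + t • (x₀ - z)) x₀ :=
            dist_triangle _ _ _
        _ < s/2 + (d - s/2) := by rw [hdyx]; linarith
        _ = d := by ring
        _ < r₀ := hdlt

/-- lower bound −Cκ^{3/2} ≤ ∫_A ζ for the dead-core energy, and in
particular |∫_A ζ| ≤ Cκ^{3/2}. -/
theorem stmt9 (r₀ M : ℝ) (hr : 0 < r₀) (hM : 0 ≤ M) :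
    ∃ C > 0, ∃ δ > 0, ∀ (x₀ : E2) (κ : ℝ), 0 < κ → κ < δ →
      ∀ (ζ : E2 → ℝ) (A : Set E2), MeasurableSet A →
        A = {z ∈ ball x₀ r₀ | ζ z ≤ 0} →
        (volume A).toReal = κ →
        ContDiffOn ℝ 1 ζ (ball x₀ r₀) →
        (∀ z ∈ ball x₀ r₀, ‖fderiv ℝ ζ z‖ ≤ M) →
        (-(C * κ ^ ((3:ℝ)/2)) ≤ ∫ z in A, ζ z) ∧
        |∫ z in A, ζ z| ≤ C * κ ^ ((3:ℝ)/2) := by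
  have hcball : volume (ball (0:E2) 1) ≠ ⊤ := measure_ball_lt_top.ne
  have hc0 : 0 < (volume (ball (0:E2) 1)).toReal :=
    ENNReal.toReal_pos (measure_ball_pos volume (0:E2) one_pos).ne' hcball
  set c := (volume (ball (0:E2) 1)).toReal with hcdef
  have hsc : 0 < Real.sqrt c := Real.sqrt_pos.mpr hc0
  refine ⟨8 * (M + 1) / Real.sqrt c, by positivity, c * r₀ ^ 2 / 16, by positivity, ?_⟩
  intro x₀ κ hκ hκδ ζ A hAmeas hAeq hAvol hζdiff hζgrad
  set M' : ℝ := M + 1 with hM'def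
  have hM'0 : 0 < M' := by linarith
  have hκc : 0 < κ / c := div_pos hκ hc0
  set s : ℝ := 4 * Real.sqrt (κ / c) with hsdef
  have hsq0 : 0 < Real.sqrt (κ / c) := Real.sqrt_pos.mpr hκc
  have hsp : 0 < s := by positivity
  have hs2 : s ^ 2 = 16 * (κ / c) := by
    rw [hsdef, mul_pow, Real.sq_sqrt hκc.le]; norm_num
  have hsr : s ≤ r₀ := by
    have h1 : s ^ 2 < r₀ ^ 2 := by
      rw [hs2]
      have : κ / c < r₀ ^ 2 / 16 := by
        rw [div_lt_div_iff₀ hc0 (by norm_num)]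
        nlinarith
      nlinarith
    exact (lt_of_pow_lt_pow_left₀ 2 hr.le h1).le
  -- ζ is Lipschitz with constant M on the ball
  have hdiffAt : ∀ x ∈ ball x₀ r₀, DifferentiableAt ℝ ζ x := fun x hx =>
    (hζdiff.differentiableOn one_ne_zero).differentiableAt (isOpen_ball.mem_nhds hx)
  have hlip : ∀ w ∈ ball x₀ r₀, ∀ z ∈ ball x₀ r₀, ‖ζ w - ζ z‖ ≤ M * ‖w - z‖ := fun w hw z hz =>
    (convex_ball x₀ r₀).norm_image_sub_le_of_norm_fderiv_le hdiffAt hζgrad hz hw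
  have hAsub : A ⊆ ball x₀ r₀ := by rw [hAeq]; exact fun x hx => hx.1
  have hAfin : volume A ≠ ⊤ := ((measure_mono hAsub).trans_lt measure_ball_lt_top).ne
  -- Pointwise lower bound on A
  set K : ℝ := 8 * M' * Real.sqrt (κ / c) with hKdef
  have hK0 : 0 < K := by positivity
  have key : ∀ z ∈ A, -K ≤ ζ z := by
    intro z hz
    by_contra hlt
    push_neg at hlt
    have hzball : z ∈ ball x₀ r₀ := hAsub hz
    obtain ⟨y, hy⟩ := aux_inner_ball x₀ z r₀ s hzball hsp hsr
    have hsubA : ball y (s/2) ⊆ A := by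
      intro w hw
      obtain ⟨hw1, hw2⟩ := hy hw
      have hb : ‖ζ w - ζ z‖ ≤ M * ‖w - z‖ := hlip w hw2 z hzball
      have hwz : ‖w - z‖ < s := by rw [← dist_eq_norm]; exact mem_ball.mp hw1
      have hub : ζ w - ζ z ≤ M * ‖w - z‖ := (le_abs_self _).trans hb
      have hMs : M * ‖w - z‖ ≤ M' * s := by
        have h1 : M * ‖w - z‖ ≤ M' * ‖w - z‖ :=
          mul_le_mul_of_nonneg_right (by linarith) (norm_nonneg _)
        have h2 : M' * ‖w - z‖ ≤ M' * s := mul_le_mul_of_nonneg_left hwz.le hM'0.le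
        linarith
      have hM's : M' * s = K / 2 := by rw [hKdef, hsdef]; ring
      have : ζ w ≤ 0 := by
        have : ζ w < -K + K / 2 := by
          have := hlt
          nlinarith
        linarith
      rw [hAeq]; exact ⟨hw2, this⟩
    have h1 : volume (ball y (s/2)) ≤ volume A := measure_mono hsubA
    have h2 : (volume (ball y (s/2))).toReal ≤ κ := hAvol ▸ ENNReal.toReal_mono hAfin h1
    have h3 : (volume (ball y (s/2))).toReal = (s/2) ^ 2 * c := by
      rw [Measure.addHaar_ball volume y (by positivity : (0:ℝ) ≤ s/2)]
      rw [ENNReal.toReal_mul, ENNReal.toReal_ofReal (by positivity)]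
      congr 2
      simp [finrank_euclideanSpace_fin]
    have h4 : (s/2) ^ 2 * c = 4 * κ := by
      have : (s/2) ^ 2 = 4 * (κ / c) := by rw [div_pow, hs2]; ring
      rw [this]
      field_simp
    rw [h3, h4] at h2
    linarith
  -- Integrability of ζ on A
  have haesm : AEStronglyMeasurable ζ (volume.restrict A) := by
    have h1 : AEStronglyMeasurable ζ (volume.restrict (ball x₀ r₀)) :=
      (hζdiff.continuousOn).aestronglyMeasurable measurableSet_ball
    exact h1.mono_measure (Measure.restrict_mono hAsub le_rfl)
  have hζle0 : ∀ z ∈ A, ζ z ≤ 0 := by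
    intro z hz; rw [hAeq] at hz; exact hz.2
  have hbdd : ∀ᵐ x ∂(volume.restrict A), ‖ζ x‖ ≤ K := by
    rw [ae_restrict_iff' hAmeas]
    filter_upwards with x hx
    rw [Real.norm_eq_abs, abs_le]
    exact ⟨key x hx, (hζle0 x hx).trans hK0.le⟩
  have hint : IntegrableOn ζ A volume :=
    ⟨haesm, HasFiniteIntegral.restrict_of_bounded K hAfin.lt_top hbdd⟩
  have hlow : -K * (volume A).toReal ≤ ∫ z in A, ζ z :=
    by have h := setIntegral_ge_of_const_le hAmeas hAfin key hint; rw [smul_eq_mul, mul_comm] at h; exact h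
  rw [hAvol] at hlow
  have hup : ∫ z in A, ζ z ≤ 0 := setIntegral_nonpos hAmeas hζle0
  -- Rewrite K * κ = C * κ^{3/2}
  have hk32 : κ ^ ((3:ℝ)/2) = κ * Real.sqrt κ := by
    rw [show (3:ℝ)/2 = 1 + 1/2 by norm_num, Real.rpow_add hκ, Real.rpow_one,
      Real.sqrt_eq_rpow]
  have hKκ : K * κ = (8 * (M + 1) / Real.sqrt c) * κ ^ ((3:ℝ)/2) := by
    rw [hk32, hKdef, Real.sqrt_div' κ, hM'def]
    · field_simp
    · exact hc0.le
  have hCpos : 0 < (8 * (M + 1) / Real.sqrt c) * κ ^ ((3:ℝ)/2) := by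
    have : 0 < κ ^ ((3:ℝ)/2) := Real.rpow_pos_of_pos hκ _
    positivity
  constructor
  · nlinarith [hlow]
  · rw [abs_le]
    constructor
    · nlinarith [hlow]
    · linarith
end
end

section
/- Under the assumptions of the minimization problem with κ in the α-uniform cone 𝕂^α, each Lagrange multiplier satisfies the lower bound μᵢ^κ > ψ₀(xᵢ) − C|κ|^{1/2} for a constant C independent of κ. -/
open MeasureTheory Metric Set Filter

noncomputable section

/-- lower bound μᵢ^κ > ψ₀(xᵢ) − C|κ|^{1/2} for κ in the α-uniform cone. -/
theorem stmt11 (D : Set E2) (hD : IsOpen D) (hDb : Bornology.IsBounded D)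
    (k : ℕ) (hk : 0 < k) (p : Fin k → E2) (hpD : ∀ i, p i ∈ D)
    (r₀ : ℝ) (hr₀ : 0 < r₀)
    (hballs : ∀ i, closedBall (p i) r₀ ⊆ D)
    (hdisj : ∀ i j, i ≠ j → Disjoint (closedBall (p i) r₀) (closedBall (p j) r₀))
    (α : ℝ) (hα : 1 ≤ α)
    (G : E2 → E2 → ℝ) (hGsym : ∀ x y, G x y = G y x)
    (Gop : (E2 → ℝ) → E2 → ℝ)
    (hGop : ∀ w x, Gop w x = ∫ y in D, G x y * w y)
    (hGL : ∃ C₀ > 0, ∀ w : E2 → ℝ, Measurable w →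
      (∀ᵐ z ∂volume, 0 ≤ w z ∧ w z ≤ 1) → ∀ x ∈ D,
      |Gop w x| ≤ C₀ * Real.sqrt (∫ z in D, w z))
    (ψ₀ : E2 → ℝ) (hψ₀ : ∀ x, ψ₀ x = ∫ y in D, G x y)
    (hψreg : ContDiffOn ℝ 1 ψ₀ (closure D))
    (hmax : ∀ i, ∀ z ∈ closedBall (p i) r₀, z ≠ p i → ψ₀ z < ψ₀ (p i))
    (𝒩 : (Fin k → ℝ) → Set (E2 → ℝ))
    (h𝒩 : ∀ κ, 𝒩 κ = {w | ∃ wi : Fin k → E2 → ℝ, (∀ x, w x = ∑ i, wi i x) ∧ ∀ i,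
      Measurable (wi i) ∧ (∀ᵐ z ∂volume, 0 ≤ wi i z ∧ wi i z ≤ 1) ∧
      (∫ z in D, wi i z) = κ i ∧ (∀ z, z ∉ ball (p i) r₀ → wi i z = 0)})
    (ℰ : (E2 → ℝ) → ℝ)
    (hE : ∀ w, ℰ w = (1/2) * (∫ x in D, ∫ y in D, G x y * w x * w y)
      - ∫ x in D, ψ₀ x * w x) :
    ∃ C > 0, ∃ δ₀ > 0, ∀ κ : Fin k → ℝ,
      (∀ i, 0 < κ i) → (∀ i j, κ i ≤ α * κ j) → (∑ i, κ i) < δ₀ →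
      ∀ (w : E2 → ℝ) (μ : Fin k → ℝ),
        w ∈ 𝒩 κ → (∀ v ∈ 𝒩 κ, ℰ w ≤ ℰ v) →
        (∀ z, w z = ∑ i, Set.indicator
          ({z | Gop w z - ψ₀ z ≤ -(μ i)} ∩ ball (p i) r₀) (fun _ => (1:ℝ)) z) →
        (∀ i, (volume ({z | Gop w z - ψ₀ z ≤ -(μ i)} ∩ ball (p i) r₀)).toReal = κ i) →
        ∀ i, ψ₀ (p i) - C * (∑ j, κ j) ^ ((1:ℝ)/2) < μ i := by
  obtain ⟨C₀, hC₀, hGLb⟩ := hGL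
  have hk' : Nonempty (Fin k) := ⟨⟨0, hk⟩⟩
  -- ψ₀ is C¹ on the open set D
  have hψD : ContDiffOn ℝ 1 ψ₀ D := hψreg.mono subset_closure
  have hdiff : ∀ x ∈ D, DifferentiableAt ℝ ψ₀ x := fun x hx =>
    (hψD.differentiableOn one_ne_zero).differentiableAt (hD.mem_nhds hx)
  have hfc : ContinuousOn (fderiv ℝ ψ₀) D :=
    hψD.continuousOn_fderiv_of_isOpen hD le_rfl
  -- per-ball Lipschitz constants
  have hM : ∀ i : Fin k, ∃ M : ℝ, 0 ≤ M ∧ ∀ z ∈ closedBall (p i) r₀,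
      ‖ψ₀ (p i) - ψ₀ z‖ ≤ M * ‖p i - z‖ := by
    intro i
    obtain ⟨M, hMb⟩ := (isCompact_closedBall (p i) r₀).exists_bound_of_continuousOn
      (hfc.mono (hballs i))
    refine ⟨max M 0, le_max_right _ _, fun z hz => ?_⟩
    exact (convex_closedBall (p i) r₀).norm_image_sub_le_of_norm_fderiv_le
      (fun x hx => hdiff x (hballs i hx))
      (fun x hx => le_trans (hMb x hx) (le_max_left _ _))
      hz (mem_closedBall_self hr₀.le)
  choose M hM0 hMlip using hM
  set L : ℝ := ∑ j, M j with hL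
  have hL0 : 0 ≤ L := Finset.sum_nonneg fun j _ => hM0 j
  have hML : ∀ i, M i ≤ L := fun i =>
    Finset.single_le_sum (fun j _ => hM0 j) (Finset.mem_univ i)
  refine ⟨C₀ + L + 1, by positivity, r₀ ^ 2, by positivity, ?_⟩
  intro κ hκpos hκcone hκδ w μ hw𝒩 _hmin hwrep hwvol i
  set s : ℝ := ∑ j, κ j with hs
  have hs0 : 0 < s := Finset.sum_pos (fun j _ => hκpos j) Finset.univ_nonempty
  set r : ℝ := Real.sqrt s with hrdef
  have hr0 : 0 < r := Real.sqrt_pos.mpr hs0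
  have hrr₀ : r < r₀ := (Real.sqrt_lt' hr₀).mpr hκδ
  -- the level set A
  set A : Set E2 := {z | Gop w z - ψ₀ z ≤ -(μ i)} ∩ ball (p i) r₀ with hA
  have hAsub : A ⊆ ball (p i) r₀ := inter_subset_right
  have hAfin : volume A ≠ ⊤ :=
    ((measure_mono hAsub).trans_lt (measure_ball_lt_top : volume (ball (p i) r₀) < ⊤)).ne
  have hAvol : volume A = ENNReal.ofReal (κ i) := by
    rw [← hwvol i, ENNReal.ofReal_toReal hAfin]
  -- there is a point of the small ball outside A
  have hnot : ¬ ball (p i) r ⊆ A := by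
    intro hsub
    have hmono : volume (ball (p i) r) ≤ volume A := measure_mono hsub
    rw [hAvol, EuclideanSpace.volume_ball] at hmono
    have hcard : (Fintype.card (Fin 2)) = 2 := by simp
    rw [hcard] at hmono
    have hΓ : Real.Gamma ((2:ℕ) / 2 + 1) = 1 := by
      norm_num [Real.Gamma_two]
    rw [hΓ] at hmono
    have hππ : Real.sqrt Real.pi ^ (2:ℕ) = Real.pi := Real.sq_sqrt Real.pi_pos.le
    rw [hππ] at hmono
    have h1 : ENNReal.ofReal r ^ (2:ℕ) * ENNReal.ofReal (Real.pi / 1)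
        = ENNReal.ofReal (s * Real.pi) := by
      rw [div_one, ← ENNReal.ofReal_pow hr0.le, ← ENNReal.ofReal_mul (by positivity)]
      congr 1
      rw [Real.sq_sqrt hs0.le]
    rw [h1] at hmono
    have h2 : s * Real.pi ≤ κ i :=
      (ENNReal.ofReal_le_ofReal_iff (hκpos i).le).mp hmono
    have h3 : κ i ≤ s := Finset.single_le_sum (fun j _ => (hκpos j).le)
      (Finset.mem_univ i)
    nlinarith [Real.pi_gt_three]
  obtain ⟨z, hzr, hzA⟩ := Set.not_subset.mp hnot
  have hzr₀ : z ∈ ball (p i) r₀ := ball_subset_ball hrr₀.le hzr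
  have hzD : z ∈ D := hballs i (ball_subset_closedBall hzr₀)
  have hzineq : ψ₀ z - Gop w z < μ i := by
    by_contra h
    push_neg at h
    exact hzA ⟨by simpa using (by linarith : Gop w z - ψ₀ z ≤ -(μ i)), hzr₀⟩
  -- unpack membership in 𝒩 κ
  rw [h𝒩 κ] at hw𝒩
  obtain ⟨wi, hwsum, hwi⟩ := hw𝒩
  have hwmeas : Measurable w := by
    have : w = fun x => ∑ j, wi j x := funext hwsum
    rw [this]
    exact Finset.measurable_sum _ fun j _ => (hwi j).1
  have hwae : ∀ᵐ z ∂volume, 0 ≤ w z ∧ w z ≤ 1 := by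
    have hall : ∀ᵐ z ∂volume, ∀ j, 0 ≤ wi j z ∧ wi j z ≤ 1 :=
      MeasureTheory.ae_all_iff.mpr fun j => (hwi j).2.1
    filter_upwards [hall] with z hz
    constructor
    · rw [hwsum z]; exact Finset.sum_nonneg fun j _ => (hz j).1
    · rw [hwsum z]
      by_cases hex : ∃ j, z ∈ ball (p j) r₀
      · obtain ⟨j0, hj0⟩ := hex
        have : ∑ j, wi j z = wi j0 z := by
          refine Finset.sum_eq_single j0 (fun j _ hj => ?_) (fun h => absurd (Finset.mem_univ j0) h)
          refine (hwi j).2.2.2 z (fun hzj => ?_)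
          exact Set.disjoint_left.mp (hdisj j j0 hj)
            (ball_subset_closedBall hzj) (ball_subset_closedBall hj0)
        rw [this]; exact (hz j0).2
      · push_neg at hex
        have : ∀ j ∈ Finset.univ, wi j z = 0 := fun j _ => (hwi j).2.2.2 z (hex j)
        rw [Finset.sum_congr rfl this, Finset.sum_const_zero]
        exact zero_le_one
  -- the total mass
  haveI : IsFiniteMeasure (volume.restrict D) :=
    ⟨by rw [Measure.restrict_apply_univ]; exact hDb.measure_lt_top⟩
  have hinteg : ∀ j, Integrable (wi j) (volume.restrict D) := by
    intro j
    refine Integrable.mono' (integrable_const (1:ℝ)) ((hwi j).1.aestronglyMeasurable) ?_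
    filter_upwards [ae_restrict_of_ae (hwi j).2.1] with z hz
    rw [Real.norm_eq_abs, abs_of_nonneg hz.1]; exact hz.2
  have hmass : (∫ z in D, w z) = s := by
    have h1 : (∫ z in D, w z) = ∫ z in D, ∑ j, wi j z := by
      congr 1; exact funext hwsum
    rw [h1, integral_finset_sum _ fun j _ => hinteg j]
    exact Finset.sum_congr rfl fun j _ => (hwi j).2.2.1
  -- Green bound
  have hG : |Gop w z| ≤ C₀ * r := by
    have := hGLb w hwmeas hwae z hzD
    rwa [hmass] at this
  -- Lipschitz bound
  have hzc : z ∈ closedBall (p i) r₀ := ball_subset_closedBall hzr₀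
  have hlip : ψ₀ (p i) - ψ₀ z ≤ L * r := by
    have h1 := hMlip i z hzc
    have h2 : ‖p i - z‖ ≤ r := by
      rw [← dist_eq_norm, dist_comm]
      exact (mem_ball.mp hzr).le
    have h3 : ψ₀ (p i) - ψ₀ z ≤ ‖ψ₀ (p i) - ψ₀ z‖ := le_abs_self _
    have h4 : M i * ‖p i - z‖ ≤ L * r :=
      mul_le_mul (hML i) h2 (norm_nonneg _) hL0
    linarith
  -- conclude
  have hrpow : (∑ j, κ j) ^ ((1:ℝ)/2) = r := (Real.sqrt_eq_rpow s).symm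
  rw [hrpow]
  have habs : Gop w z ≤ C₀ * r := (abs_le.mp hG).2
  have hexp : (C₀ + L + 1) * r = C₀ * r + L * r + r := by ring
  clear_value L s r A
  linarith [hzineq, hlip, habs, hr0, hexp]
end
end
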